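/- For all l ∈ [0, π_2/2], sleaf_2(l)² + cleaf_2(l)² + sleaf_2(l)²·cleaf_2(l)² = 1. -/

import Mathlib

/-! The map φ(x) = √((1 - x²)/(1 + x²)) is a decreasing involution of [0, 1] with
√(1 - φ(x)⁴) = 2x/(1 + x²) and √(1 - x⁴) = (1 + x²) φ(x). With these, the derivative of
x ↦ arcsleaf x + arcsleaf (φ x) vanishes, so arcsleaf x + arcsleaf (φ x) = arcsleaf 1.
If arcsleaf s = l and ∫_c^1 = l, then arcsleaf c = arcsleaf 1 - l = arcsleaf (φ s), so c = φ s
because arcsleaf is strictly increasing, and s² + c² + s²c² = 1 is c² = (1 - s²)/(1 + s²). -/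

open MeasureTheory Set intervalIntegral

theorem eq_of_hasDerivAt_zero_of_continuousOn {f : ℝ → ℝ} {a b : ℝ} (hab : a ≤ b)
    (hcont : ContinuousOn f (Icc a b)) (hderiv : ∀ x ∈ Ioo a b, HasDerivAt f 0 x) :
    f a = f b := by
  rcases hab.eq_or_lt with rfl | hlt
  · rfl
  obtain ⟨c, -, hc⟩ := exists_hasDerivAt_eq_slope f (fun _ ↦ 0) hlt hcont hderiv
  rw [eq_comm, div_eq_zero_iff, sub_eq_zero, sub_eq_zero] at hc
  exact hc.elim Eq.symm fun h ↦ absurd h hlt.ne'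

theorem one_div_sqrt_one_sub_pow_four_le {t : ℝ} (ht₀ : 0 ≤ t) (ht₁ : t < 1) :
    1 / √(1 - t ^ 4) ≤ (1 - t) ^ (-(1 / 2) : ℝ) := by
  have h₁ : 0 < 1 - t := by linarith
  have h₄ : 1 - t ≤ 1 - t ^ 4 := by
    nlinarith [mul_nonneg (mul_nonneg ht₀ h₁.le) (by positivity : (0:ℝ) ≤ 1 + t + t ^ 2)]
  rw [Real.rpow_neg h₁.le, ← Real.sqrt_eq_rpow, one_div]
  exact inv_anti₀ (Real.sqrt_pos.2 h₁) (Real.sqrt_le_sqrt h₄)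

theorem intervalIntegrable_one_div_sqrt_one_sub_pow_four :
    IntervalIntegrable (fun t : ℝ ↦ 1 / √(1 - t ^ 4)) volume 0 1 := by
  have hdom : IntervalIntegrable (fun t : ℝ ↦ (1 - t) ^ (-(1 / 2) : ℝ)) volume 0 1 := by
    simpa using
      (intervalIntegrable_rpow' (a := 1) (b := 0) (r := -(1 / 2)) (by norm_num)).comp_sub_left 1
  refine hdom.mono_fun (Measurable.aestronglyMeasurable (by fun_prop)) ?_
  filter_upwards [ae_restrict_mem measurableSet_uIoc, Measure.ae_ne _ 1] with t ht ht₁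
  rw [uIoc_of_le zero_le_one] at ht
  rw [Real.norm_of_nonneg (by positivity),
    Real.norm_of_nonneg (Real.rpow_nonneg (by linarith [ht.2]) _)]
  exact one_div_sqrt_one_sub_pow_four_le ht.1.le (lt_of_le_of_ne ht.2 ht₁)

theorem intervalIntegrable_one_div_sqrt_one_sub_pow_four_of_mem {a b : ℝ}
    (ha : a ∈ Icc (0:ℝ) 1) (hb : b ∈ Icc (0:ℝ) 1) :
    IntervalIntegrable (fun t : ℝ ↦ 1 / √(1 - t ^ 4)) volume a b :=
  intervalIntegrable_one_div_sqrt_one_sub_pow_four.mono_set <| by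
    rw [uIcc_of_le zero_le_one]; exact uIcc_subset_Icc ha hb

noncomputable def arcsleaf (x : ℝ) : ℝ := ∫ t in (0:ℝ)..x, 1 / √(1 - t ^ 4)

theorem continuousOn_arcsleaf : ContinuousOn arcsleaf (Icc 0 1) := by
  unfold arcsleaf
  simpa only [uIcc_of_le zero_le_one] using
    continuousOn_primitive_interval' intervalIntegrable_one_div_sqrt_one_sub_pow_four
      left_mem_uIcc

theorem hasDerivAt_arcsleaf {x : ℝ} (hx : x ∈ Ioo (0:ℝ) 1) :
    HasDerivAt arcsleaf (1 / √(1 - x ^ 4)) x := by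
  have hpos : 0 < 1 - x ^ 4 := by
    linarith [pow_lt_one₀ hx.1.le hx.2 (by norm_num : 4 ≠ 0)]
  refine integral_hasDerivAt_right
    (intervalIntegrable_one_div_sqrt_one_sub_pow_four_of_mem (left_mem_Icc.2 zero_le_one)
      (Ioo_subset_Icc_self hx))
    (Measurable.stronglyMeasurable (by fun_prop)).stronglyMeasurableAtFilter ?_
  exact continuousAt_const.div (by fun_prop) (by positivity)

theorem strictMonoOn_arcsleaf : StrictMonoOn arcsleaf (Icc 0 1) := by
  refine strictMonoOn_of_hasDerivWithinAt_pos (f' := fun x ↦ 1 / √(1 - x ^ 4))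
    (convex_Icc 0 1) continuousOn_arcsleaf (fun x hx ↦ ?_) (fun x hx ↦ ?_) <;>
    rw [interior_Icc] at hx
  · exact (hasDerivAt_arcsleaf hx).hasDerivWithinAt
  · have : x ^ 4 < 1 := pow_lt_one₀ hx.1.le hx.2 (by norm_num)
    exact one_div_pos.2 (Real.sqrt_pos.2 (by linarith))

noncomputable def leafCompl (x : ℝ) : ℝ := √((1 - x ^ 2) / (1 + x ^ 2))

theorem continuous_leafCompl : Continuous leafCompl :=
  Real.continuous_sqrt.comp <| Continuous.div (by fun_prop) (by fun_prop) fun x ↦ by positivity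

theorem sq_leafCompl {x : ℝ} (hx : x ∈ Icc (0:ℝ) 1) :
    leafCompl x ^ 2 = (1 - x ^ 2) / (1 + x ^ 2) :=
  Real.sq_sqrt <| div_nonneg (by nlinarith [hx.1, hx.2]) (by positivity)

theorem leafCompl_mem_Icc (x : ℝ) : leafCompl x ∈ Icc (0:ℝ) 1 :=
  ⟨Real.sqrt_nonneg _, Real.sqrt_le_one.2 <| (div_le_one (by positivity)).2 (by nlinarith)⟩

theorem leafCompl_mem_Ioo {x : ℝ} (hx : x ∈ Ioo (0:ℝ) 1) : leafCompl x ∈ Ioo (0:ℝ) 1 := by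
  have : x ^ 2 < 1 := pow_lt_one₀ hx.1.le hx.2 (by norm_num)
  refine ⟨Real.sqrt_pos.2 (div_pos (by linarith) (by positivity)), (Real.sqrt_lt' one_pos).2 ?_⟩
  rw [one_pow, div_lt_one (by positivity)]
  linarith [pow_pos hx.1 2]

theorem sq_add_sq_add_sq_mul_sq_leafCompl {x : ℝ} (hx : x ∈ Icc (0:ℝ) 1) :
    x ^ 2 + leafCompl x ^ 2 + x ^ 2 * leafCompl x ^ 2 = 1 := by
  rw [sq_leafCompl hx]
  field_simp
  ring

theorem sqrt_one_sub_leafCompl_pow_four {x : ℝ} (hx : x ∈ Icc (0:ℝ) 1) :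
    √(1 - leafCompl x ^ 4) = 2 * x / (1 + x ^ 2) := by
  have : 1 - leafCompl x ^ 4 = (2 * x / (1 + x ^ 2)) ^ 2 := by
    rw [show leafCompl x ^ 4 = (leafCompl x ^ 2) ^ 2 by ring, sq_leafCompl hx]
    field_simp
    ring
  rw [this, Real.sqrt_sq (div_nonneg (by linarith [hx.1]) (by positivity))]

theorem sqrt_one_sub_pow_four_eq_mul_leafCompl {x : ℝ} (hx : x ∈ Icc (0:ℝ) 1) :
    √(1 - x ^ 4) = (1 + x ^ 2) * leafCompl x := by
  have : 1 - x ^ 4 = ((1 + x ^ 2) * leafCompl x) ^ 2 := by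
    rw [mul_pow, sq_leafCompl hx]
    field_simp
    ring
  rw [this, Real.sqrt_sq (mul_nonneg (by positivity) (leafCompl_mem_Icc x).1)]

theorem hasDerivAt_leafCompl {x : ℝ} (hx : x ∈ Ioo (0:ℝ) 1) :
    HasDerivAt leafCompl (-2 * x / ((1 + x ^ 2) ^ 2 * leafCompl x)) x := by
  have hquot : HasDerivAt (fun x : ℝ ↦ (1 - x ^ 2) / (1 + x ^ 2))
      (-4 * x / (1 + x ^ 2) ^ 2) x := by
    refine (((hasDerivAt_pow 2 x).const_sub 1).div ((hasDerivAt_pow 2 x).const_add 1)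
      (by positivity)).congr_deriv ?_
    ring
  have hφ := (leafCompl_mem_Ioo hx).1
  refine (hquot.sqrt (Real.sqrt_pos.1 hφ).ne').congr_deriv ?_
  change _ / (2 * leafCompl x) = _
  field_simp
  ring

theorem hasDerivAt_arcsleaf_comp_leafCompl {x : ℝ} (hx : x ∈ Ioo (0:ℝ) 1) :
    HasDerivAt (fun x ↦ arcsleaf (leafCompl x)) (-(1 / √(1 - x ^ 4))) x := by
  have hφ := leafCompl_mem_Ioo hx
  refine ((hasDerivAt_arcsleaf hφ).comp x (hasDerivAt_leafCompl hx)).congr_deriv ?_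
  rw [sqrt_one_sub_leafCompl_pow_four (Ioo_subset_Icc_self hx),
    sqrt_one_sub_pow_four_eq_mul_leafCompl (Ioo_subset_Icc_self hx)]
  have := hx.1.ne'
  have := hφ.1.ne'
  field_simp

theorem arcsleaf_add_arcsleaf_leafCompl {x : ℝ} (hx : x ∈ Icc (0:ℝ) 1) :
    arcsleaf x + arcsleaf (leafCompl x) = arcsleaf 1 := by
  have hcont : ContinuousOn (fun y ↦ arcsleaf y + arcsleaf (leafCompl y)) (Icc x 1) := by
    have hsub : Icc x 1 ⊆ Icc 0 1 := Icc_subset_Icc_left hx.1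
    exact (continuousOn_arcsleaf.mono hsub).add <| continuousOn_arcsleaf.comp
      continuous_leafCompl.continuousOn fun y _ ↦ leafCompl_mem_Icc y
  have hderiv : ∀ y ∈ Ioo x 1, HasDerivAt (fun y ↦ arcsleaf y + arcsleaf (leafCompl y)) 0 y :=
    fun y hy ↦ by
      have hy' : y ∈ Ioo (0:ℝ) 1 := ⟨hx.1.trans_lt hy.1, hy.2⟩
      have := (hasDerivAt_arcsleaf hy').add (hasDerivAt_arcsleaf_comp_leafCompl hy')
      rwa [add_neg_cancel] at this
  rw [eq_of_hasDerivAt_zero_of_continuousOn hx.2 hcont hderiv]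
  simp [leafCompl, arcsleaf]

theorem arcsleaf_add_integral_eq_arcsleaf_one {c : ℝ} (hc : c ∈ Icc (0:ℝ) 1) :
    arcsleaf c + ∫ t in c..1, 1 / √(1 - t ^ 4) = arcsleaf 1 :=
  integral_add_adjacent_intervals
    (intervalIntegrable_one_div_sqrt_one_sub_pow_four_of_mem (left_mem_Icc.2 zero_le_one) hc)
    (intervalIntegrable_one_div_sqrt_one_sub_pow_four_of_mem hc (right_mem_Icc.2 zero_le_one))

theorem leaf_pythagorean_general (π₂ : ℝ)
    (sleaf : ℝ → ℝ)
    (hs : ∀ l ∈ Set.Icc 0 (π₂ / 2), sleaf l ∈ Set.Icc (0:ℝ) 1 ∧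
      (∫ t in (0:ℝ)..(sleaf l), 1 / Real.sqrt (1 - t ^ 4)) = l)
    (cleaf : ℝ → ℝ)
    (hc : ∀ l ∈ Set.Icc 0 (π₂ / 2), cleaf l ∈ Set.Icc (0:ℝ) 1 ∧
      (∫ t in (cleaf l)..1, 1 / Real.sqrt (1 - t ^ 4)) = l) :
    ∀ l ∈ Set.Icc 0 (π₂ / 2),
      (sleaf l) ^ 2 + (cleaf l) ^ 2 + (sleaf l) ^ 2 * (cleaf l) ^ 2 = 1 := by
  intro l hl
  obtain ⟨hs_mem, hs_eq⟩ := hs l hl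
  obtain ⟨hc_mem, hc_eq⟩ := hc l hl
  have hcleaf : cleaf l = leafCompl (sleaf l) := by
    refine strictMonoOn_arcsleaf.injOn hc_mem (leafCompl_mem_Icc _) ?_
    have h₁ := arcsleaf_add_integral_eq_arcsleaf_one hc_mem
    have h₂ := arcsleaf_add_arcsleaf_leafCompl hs_mem
    change arcsleaf (sleaf l) = l at hs_eq
    linarith
  rw [hcleaf]
  exact sq_add_sq_add_sq_mul_sq_leafCompl hs_mem

theorem leaf_pythagorean (π₂ : ℝ) (hπ : π₂ = 2 * ∫ t in (0:ℝ)..1, 1 / Real.sqrt (1 - t ^ 4))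
    (sleaf : ℝ → ℝ)
    (hs : ∀ l ∈ Set.Icc 0 (π₂ / 2), sleaf l ∈ Set.Icc (0:ℝ) 1 ∧
      (∫ t in (0:ℝ)..(sleaf l), 1 / Real.sqrt (1 - t ^ 4)) = l)
    (cleaf : ℝ → ℝ)
    (hc : ∀ l ∈ Set.Icc 0 (π₂ / 2), cleaf l ∈ Set.Icc (0:ℝ) 1 ∧
      (∫ t in (cleaf l)..1, 1 / Real.sqrt (1 - t ^ 4)) = l) :
    ∀ l ∈ Set.Icc 0 (π₂ / 2),
      (sleaf l) ^ 2 + (cleaf l) ^ 2 + (sleaf l) ^ 2 * (cleaf l) ^ 2 = 1 :=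
  leaf_pythagorean_general π₂ sleaf hs cleaf hc
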